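/- arXiv:2509.16000 — 3 statements merged into one kernel-verified Lean document; each statement's English description precedes it below -/
import Mathlib

section
/- Let [M] = [M̲, M̄] ⊆ ℝ^{n×m} be an interval matrix and p ∈ ℝ^n. Define D^c = (M̲ + M̄)/2, R = (M̄ − M̲)/2, s(i) = ‖R(i,:)‖₁, and D^s = diag(s). Then the set X = {p + Nξ : N ∈ [M̲, M̄], ξ ∈ [-1,1]^m} is contained in the zonotope ⟨p, [D^c D^s]⟩ with generator matrix the concatenation of D^c and D^s. -/
def zonotope {n ι : Type*} [Fintype ι] (p : n → ℝ) (M : Matrix n ι ℝ) :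
    Set (n → ℝ) :=
  {x | ∃ ξ : ι → ℝ, (∀ j, |ξ j| ≤ 1) ∧ x = p + M.mulVec ξ}

/-!
Write `N = D^c + (N - D^c)`. Every entry of `N - D^c` lies within the half-width `R` of its
interval, so for `ξ` in the unit cube the `i`-th coordinate of `(N - D^c) ξ` is bounded by
`s(i) = ‖R(i,:)‖₁`. A vector bounded coordinatewise by `s` is `D^s η` for some `η` in the unit
cube, hence `p + N ξ = p + D^c ξ + D^s η = p + [D^c D^s] (ξ, η)`.
-/

open Matrix

section

variable {n ι κ : Type*}

theorem abs_sub_midpoint_le_half_width {Ml N Mu : Matrix n ι ℝ}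
    (h : ∀ i j, Ml i j ≤ N i j ∧ N i j ≤ Mu i j) (i : n) (j : ι) :
    |(N - (1 / 2 : ℝ) • (Ml + Mu)) i j| ≤ |((1 / 2 : ℝ) • (Mu - Ml)) i j| := by
  obtain ⟨hl, hu⟩ := h i j
  simp only [Matrix.sub_apply, Matrix.smul_apply, Matrix.add_apply, smul_eq_mul]
  rw [abs_le, abs_of_nonneg (by linarith)]
  constructor <;> linarith

theorem abs_mulVec_le_sum_abs [Fintype ι] (A : Matrix n ι ℝ) {ξ : ι → ℝ} (hξ : ∀ j, |ξ j| ≤ 1)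
    (i : n) :
    |(A *ᵥ ξ) i| ≤ ∑ j, |A i j| :=
  calc |∑ j, A i j * ξ j| ≤ ∑ j, |A i j * ξ j| := Finset.abs_sum_le_sum_abs _ _
    _ ≤ ∑ j, |A i j| := Finset.sum_le_sum fun j _ => by
        rw [abs_mul]
        exact mul_le_of_le_one_right (abs_nonneg _) (hξ j)

theorem exists_diagonal_mulVec_eq_of_abs_le [Fintype n] [DecidableEq n] {s v : n → ℝ}
    (h : ∀ i, |v i| ≤ s i) : ∃ η : n → ℝ, (∀ i, |η i| ≤ 1) ∧ v = diagonal s *ᵥ η := by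
  -- `v i / 0 = 0` is harmless: `s i = 0` forces `v i = 0`.
  refine ⟨fun i => v i / s i, fun i => ?_, funext fun i => ?_⟩
  · rw [abs_div, abs_of_nonneg ((abs_nonneg _).trans (h i))]
    exact div_le_one_of_le₀ (h i) ((abs_nonneg _).trans (h i))
  · rw [mulVec_diagonal]
    rcases eq_or_ne (s i) 0 with hs | hs
    · simpa [hs] using h i
    · exact (mul_div_cancel₀ _ hs).symm

theorem add_mulVec_add_mem_zonotope_fromCols [Fintype ι] [Fintype κ] (p : n → ℝ)
    (A : Matrix n ι ℝ) (B : Matrix n κ ℝ) {ξ : ι → ℝ} {η : κ → ℝ} (hξ : ∀ j, |ξ j| ≤ 1)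
    (hη : ∀ k, |η k| ≤ 1) :
    p + (A *ᵥ ξ + B *ᵥ η) ∈ zonotope p (fromCols A B) :=
  ⟨Sum.elim ξ η, by rintro (j | k); exacts [hξ j, hη k], by rw [fromCols_mulVec_sumElim]⟩

end

theorem stmt3_general {n m : ℕ} (p : Fin n → ℝ)
    (Ml Mu : Matrix (Fin n) (Fin m) ℝ) :
    {x | ∃ N : Matrix (Fin n) (Fin m) ℝ, (∀ i j, Ml i j ≤ N i j ∧ N i j ≤ Mu i j) ∧
        ∃ ξ : Fin m → ℝ, (∀ j, |ξ j| ≤ 1) ∧ x = p + N.mulVec ξ}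
      ⊆ zonotope p
          (Matrix.fromCols ((1 / 2 : ℝ) • (Ml + Mu))
            (Matrix.diagonal fun i => ∑ j, |((1 / 2 : ℝ) • (Mu - Ml)) i j|)) := by
  rintro x ⟨N, hN, ξ, hξ, rfl⟩
  set Dc : Matrix (Fin n) (Fin m) ℝ := (1 / 2 : ℝ) • (Ml + Mu)
  obtain ⟨η, hη, hE⟩ := exists_diagonal_mulVec_eq_of_abs_le fun i =>
    (abs_mulVec_le_sum_abs (N - Dc) hξ i).trans
      (Finset.sum_le_sum fun j _ => abs_sub_midpoint_le_half_width hN i j)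
  have hsplit : N *ᵥ ξ = Dc *ᵥ ξ + (N - Dc) *ᵥ ξ := by rw [sub_mulVec, add_sub_cancel]
  rw [hsplit, hE]
  exact add_mulVec_add_mem_zonotope_fromCols p _ _ hξ hη

/-- Zonotope inclusion for an interval matrix `[M̲, M̄]`:
`{p + Nξ : M̲ ≤ N ≤ M̄, ξ ∈ [-1,1]^m} ⊆ ⟨p, [D^c D^s]⟩`. -/
theorem stmt3 {n m : ℕ} (p : Fin n → ℝ)
    (Ml Mu : Matrix (Fin n) (Fin m) ℝ) (hle : ∀ i j, Ml i j ≤ Mu i j) :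
    {x | ∃ N : Matrix (Fin n) (Fin m) ℝ, (∀ i j, Ml i j ≤ N i j ∧ N i j ≤ Mu i j) ∧
        ∃ ξ : Fin m → ℝ, (∀ j, |ξ j| ≤ 1) ∧ x = p + N.mulVec ξ}
      ⊆ zonotope p
          (Matrix.fromCols ((1 / 2 : ℝ) • (Ml + Mu))
            (Matrix.diagonal fun i => ∑ j, |((1 / 2 : ℝ) • (Mu - Ml)) i j|)) :=
  stmt3_general p Ml Mu
end

section
/- Let M ≻ 0 be a symmetric positive definite matrix and N a symmetric matrix, and Q a matrix of compatible dimensions. Then QᵀMQ − N ≺ 0 if and only if there exists a matrix U such that the block matrix [[−N, (UQ)ᵀ], [UQ, M − U − Uᵀ]] ≺ 0. -/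
/-!
Conjugating the block matrix by the unit lower-triangular `T = [[1, 0], [Q, 1]]` gives
`Tᵀ [[N, -(UQ)ᵀ], [-UQ, U + Uᵀ - M]] T = [[N - QᵀMQ, Qᵀ(U - M)], [(Uᵀ - M)Q, U + Uᵀ - M]]`,
whose top-left block does not depend on `U`. Since `T` is invertible, positive definiteness of the
block matrix is that of the conjugate. Any positive definite matrix has positive definite
top-left block, and for `U = M` the conjugate is block diagonal with blocks `N - QᵀMQ` and `M`.
-/

open Matrix

variable {m n : Type*} [Fintype m] [Fintype n]

open scoped ComplexOrder in
theorem Matrix.PosDef.fromBlocks_zero {𝕜 : Type*} [RCLike 𝕜] {A : Matrix m m 𝕜}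
    {D : Matrix n n 𝕜} (hA : A.PosDef) (hD : D.PosDef) : (fromBlocks A 0 0 D).PosDef := by
  refine .of_dotProduct_mulVec_pos ?_ fun v hv => ?_
  · simp [IsHermitian, fromBlocks_conjTranspose, hA.1.eq, hD.1.eq]
  obtain ⟨x, y, rfl⟩ : ∃ x y, v = Sum.elim x y := ⟨_, _, (Sum.elim_comp_inl_inr v).symm⟩
  rw [fromBlocks_mulVec, Function.star_sumElim, sumElim_dotProduct_sumElim]
  simp only [Sum.elim_comp_inl, Sum.elim_comp_inr, zero_mulVec, add_zero, zero_add]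
  obtain hx | hy : x ≠ 0 ∨ y ≠ 0 := by
    contrapose! hv
    rw [hv.1, hv.2, Sum.elim_zero_zero]
  · exact add_pos_of_pos_of_nonneg (hA.dotProduct_mulVec_pos hx)
      (hD.posSemidef.dotProduct_mulVec_nonneg y)
  · exact add_pos_of_nonneg_of_pos (hA.posSemidef.dotProduct_mulVec_nonneg x)
      (hD.dotProduct_mulVec_pos hy)

variable [DecidableEq m] [DecidableEq n]

theorem isUnit_fromBlocks_one_zero {R : Type*} [CommRing R] (Q : Matrix m n R) :
    IsUnit (fromBlocks 1 0 Q 1 : Matrix (n ⊕ m) (n ⊕ m) R) := by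
  simp [isUnit_iff_isUnit_det]

theorem fromBlocks_one_zero_transpose_mul_neg_fromBlocks_mul {R : Type*} [CommRing R]
    (M U : Matrix m m R) (N : Matrix n n R) (Q : Matrix m n R) :
    (fromBlocks 1 0 Q 1)ᵀ * -fromBlocks (-N) (U * Q)ᵀ (U * Q) (M - U - Uᵀ) *
        fromBlocks 1 0 Q 1 =
      fromBlocks (N - Qᵀ * M * Q) (Qᵀ * (U - M)) ((Uᵀ - M) * Q) (U + Uᵀ - M) := by
  simp only [fromBlocks_transpose, fromBlocks_neg, fromBlocks_multiply, transpose_mul,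
    transpose_one, transpose_zero, Matrix.add_mul, Matrix.mul_sub, Matrix.sub_mul,
    Matrix.mul_neg, Matrix.neg_mul, Matrix.one_mul, Matrix.mul_one, Matrix.zero_mul,
    Matrix.mul_zero, Matrix.mul_assoc, neg_neg, neg_sub]
  congr 1 <;> abel

theorem posDef_neg_fromBlocks_iff (M U : Matrix m m ℝ) (N : Matrix n n ℝ) (Q : Matrix m n ℝ) :
    (-fromBlocks (-N) (U * Q)ᵀ (U * Q) (M - U - Uᵀ)).PosDef ↔
      (fromBlocks (N - Qᵀ * M * Q) (Qᵀ * (U - M)) ((Uᵀ - M) * Q) (U + Uᵀ - M)).PosDef := by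
  rw [← fromBlocks_one_zero_transpose_mul_neg_fromBlocks_mul]
  -- over `ℝ`, `star T` is `Tᵀ` by definition
  exact (IsUnit.posDef_star_left_conjugate_iff (isUnit_fromBlocks_one_zero Q)).symm

theorem stmt8_general {p n : ℕ} (M : Matrix (Fin p) (Fin p) ℝ) (hM : M.PosDef)
    (N : Matrix (Fin n) (Fin n) ℝ)
    (Q : Matrix (Fin p) (Fin n) ℝ) :
    (-(Qᵀ * M * Q - N)).PosDef ↔
      ∃ U : Matrix (Fin p) (Fin p) ℝ,
        (-(Matrix.fromBlocks (-N) (U * Q)ᵀ (U * Q) (M - U - Uᵀ))).PosDef := by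
  simp_rw [neg_sub, posDef_neg_fromBlocks_iff]
  constructor
  · intro h
    refine ⟨M, ?_⟩
    have hMt : Mᵀ = M := by simpa using hM.1.eq
    rw [hMt, sub_self, Matrix.mul_zero, Matrix.zero_mul, add_sub_cancel_right]
    exact h.fromBlocks_zero hM
  · rintro ⟨U, hU⟩
    exact hU.submatrix Sum.inl_injective

/-- Reciprocal projection lemma: for `M ≻ 0` symmetric and `N` symmetric,
`QᵀMQ - N ≺ 0` iff there exists `U` with
`[[-N, (UQ)ᵀ], [UQ, M - U - Uᵀ]] ≺ 0`. -/
theorem stmt8 {p n : ℕ} (M : Matrix (Fin p) (Fin p) ℝ) (hM : M.PosDef)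
    (N : Matrix (Fin n) (Fin n) ℝ) (hN : N.IsSymm)
    (Q : Matrix (Fin p) (Fin n) ℝ) :
    (-(Qᵀ * M * Q - N)).PosDef ↔
      ∃ U : Matrix (Fin p) (Fin p) ℝ,
        (-(Matrix.fromBlocks (-N) (U * Q)ᵀ (U * Q) (M - U - Uᵀ))).PosDef :=
  stmt8_general M hM N Q
end

section
/- Let Ã ∈ ℝ^{n×n}, and suppose e ∈ ⟨0, M⟩ (a centered zonotope), J is a matrix in an interval matrix [Ja̲, Jā], w ∈ ⟨0, M_w⟩, v ∈ ⟨0, M_v⟩, and D₁, L, D₂ are fixed matrices of compatible dimensions. Then Ã e + J e' + D₁ w − L D₂ v, where e' ∈ ⟨0, M⟩, lies in the zonotope ⟨0, [ÃM, D^c, D^s, D₁M_w, LD₂M_v]⟩, where D^c and D^s are the center and diagonal-radius matrices of the interval matrix product [Ja̲, Jā]·M as in the zonotope inclusion lemma. -/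
/-!
Every summand of `Ãe + Je' + D₁w - LD₂v` lies in a centered zonotope, and the Minkowski sum of
zonotopes is the zonotope of the concatenated generators. The only nontrivial summand is `Je'`:
with `e' = Mξ` and `P = JM ∈ [N̲, N̄]`, split `Pξ = D^c ξ + (P - D^c)ξ`; each entry of
`(P - D^c)ξ` is bounded by the row sum `s i` of the radius `(N̄ - N̲)/2`, so that vector lies in
the box `⟨0, diag s⟩`.
-/

open Matrix

open Pointwise

section Zonotope

variable {n ι κ : Type*} [Fintype ι] [Fintype κ]

theorem zonotope_fromCols (p q : n → ℝ) (M : Matrix n ι ℝ) (N : Matrix n κ ℝ) :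
    zonotope (p + q) (fromCols M N) = zonotope p M + zonotope q N := by
  ext x
  simp only [zonotope, Set.mem_add, Set.mem_ofPred_eq]
  constructor
  · rintro ⟨ξ, hξ, rfl⟩
    refine ⟨p + M *ᵥ (ξ ∘ Sum.inl), ⟨_, fun j => hξ _, rfl⟩,
      q + N *ᵥ (ξ ∘ Sum.inr), ⟨_, fun j => hξ _, rfl⟩, ?_⟩
    rw [fromCols_mulVec]
    abel
  · rintro ⟨_, ⟨ξ, hξ, rfl⟩, _, ⟨η, hη, rfl⟩, rfl⟩
    refine ⟨Sum.elim ξ η, fun j => j.rec hξ hη, ?_⟩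
    rw [fromCols_mulVec_sumElim]
    abel

theorem zonotope_zero_fromCols (M : Matrix n ι ℝ) (N : Matrix n κ ℝ) :
    zonotope 0 (fromCols M N) = zonotope 0 M + zonotope 0 N := by
  simpa using zonotope_fromCols 0 0 M N

theorem mulVec_mem_zonotope_mul [Fintype n] {p x : n → ℝ} {M : Matrix n ι ℝ} {k : Type*}
    (A : Matrix k n ℝ) (hx : x ∈ zonotope p M) : A *ᵥ x ∈ zonotope (A *ᵥ p) (A * M) := by
  obtain ⟨ξ, hξ, rfl⟩ := hx
  exact ⟨ξ, hξ, by rw [mulVec_add, mulVec_mulVec]⟩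

theorem neg_mem_zonotope {p x : n → ℝ} {M : Matrix n ι ℝ} (hx : x ∈ zonotope p M) :
    -x ∈ zonotope (-p) M := by
  obtain ⟨ξ, hξ, rfl⟩ := hx
  exact ⟨-ξ, fun j => by simpa using hξ j, by rw [mulVec_neg, neg_add]⟩

theorem mem_zonotope_diagonal_of_abs_le [Fintype n] [DecidableEq n] {y s : n → ℝ}
    (hy : ∀ i, |y i| ≤ s i) : y ∈ zonotope 0 (diagonal s) := by
  -- where `s i = 0` the entry `y i` vanishes, so any generator coefficient works there
  refine ⟨fun i => if s i = 0 then 0 else y i / s i, fun i => ?_, funext fun i => ?_⟩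
  · have hs : 0 ≤ s i := (abs_nonneg _).trans (hy i)
    dsimp only
    split_ifs with h
    · simp
    · rw [abs_div, abs_of_nonneg hs, div_le_one (hs.lt_of_ne' h)]
      exact hy i
  · rw [Pi.add_apply, Pi.zero_apply, zero_add, mulVec_diagonal]
    split_ifs with h
    · simpa [h] using hy i
    · field_simp

end Zonotope

section IntervalMatrix

variable {n m : Type*} [Fintype m]

theorem abs_sub_midpoint_le_half_sub {a l u : ℝ} (hl : l ≤ a) (hu : a ≤ u) :
    |a - (1 / 2) * (l + u)| ≤ (1 / 2) * (u - l) := by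
  rw [abs_sub_le_iff]
  constructor <;> linarith

theorem mulVec_mem_zonotope_interval [Fintype n] [DecidableEq n] {Nl Nu P : Matrix n m ℝ}
    (hP : ∀ i j, Nl i j ≤ P i j ∧ P i j ≤ Nu i j) {ξ : m → ℝ} (hξ : ∀ j, |ξ j| ≤ 1) :
    P *ᵥ ξ ∈ zonotope 0 ((1 / 2 : ℝ) • (Nl + Nu)) +
      zonotope 0 (diagonal fun i => ∑ j, ((1 / 2 : ℝ) • (Nu - Nl)) i j) := by
  set Dc : Matrix n m ℝ := (1 / 2 : ℝ) • (Nl + Nu)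
  have hdev : ∀ i j, |(P - Dc) i j| ≤ ((1 / 2 : ℝ) • (Nu - Nl)) i j := fun i j =>
    abs_sub_midpoint_le_half_sub (hP i j).1 (hP i j).2
  have hrow : ∀ i, |((P - Dc) *ᵥ ξ) i| ≤ ∑ j, ((1 / 2 : ℝ) • (Nu - Nl)) i j := fun i =>
    calc |((P - Dc) *ᵥ ξ) i| = |∑ j, (P - Dc) i j * ξ j| := rfl
      _ ≤ ∑ j, |(P - Dc) i j| * |ξ j| := by
          simpa only [abs_mul] using
            Finset.abs_sum_le_sum_abs (fun j => (P - Dc) i j * ξ j) Finset.univ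
      _ ≤ ∑ j, ((1 / 2 : ℝ) • (Nu - Nl)) i j := Finset.sum_le_sum fun j _ =>
          (mul_le_of_le_one_right (abs_nonneg _) (hξ j)).trans (hdev i j)
  refine Set.mem_add.mpr ⟨Dc *ᵥ ξ, ⟨ξ, hξ, by rw [zero_add]⟩,
    (P - Dc) *ᵥ ξ, mem_zonotope_diagonal_of_abs_le hrow, ?_⟩
  rw [sub_mulVec, add_sub_cancel]

end IntervalMatrix

/-- One-step zonotopic reachability of the error dynamics:
`Ãe + Je' + D₁w - LD₂v ∈ ⟨0, [ÃM, D^c, D^s, D₁M_w, LD₂M_v]⟩`, where `D^c, D^s` come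
from the zonotope-inclusion of the interval matrix product `[Ja̲, Jā]·M`. -/
theorem stmt16 {n m mw mv dw dv : ℕ}
    (Atil : Matrix (Fin n) (Fin n) ℝ) (M : Matrix (Fin n) (Fin m) ℝ)
    (Jal Jau J : Matrix (Fin n) (Fin n) ℝ)
    (hJ : ∀ i j, Jal i j ≤ J i j ∧ J i j ≤ Jau i j)
    (D₁ : Matrix (Fin n) (Fin dw) ℝ) (L : Matrix (Fin n) (Fin dv) ℝ)
    (D₂ : Matrix (Fin dv) (Fin dv) ℝ)
    (Mw : Matrix (Fin dw) (Fin mw) ℝ) (Mv : Matrix (Fin dv) (Fin mv) ℝ)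
    -- `[Nl, Nu]` is the interval matrix product `[Ja̲, Jā]·M`
    (Nl Nu : Matrix (Fin n) (Fin m) ℝ)
    (hN : ∀ K : Matrix (Fin n) (Fin n) ℝ, (∀ i j, Jal i j ≤ K i j ∧ K i j ≤ Jau i j) →
      ∀ i j, Nl i j ≤ (K * M) i j ∧ (K * M) i j ≤ Nu i j)
    (e e' : Fin n → ℝ) (w : Fin dw → ℝ) (v : Fin dv → ℝ)
    (he : e ∈ zonotope 0 M) (he' : e' ∈ zonotope 0 M)
    (hw : w ∈ zonotope 0 Mw) (hv : v ∈ zonotope 0 Mv) :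
    Atil.mulVec e + J.mulVec e' + D₁.mulVec w - (L * D₂).mulVec v ∈
      zonotope (0 : Fin n → ℝ)
        (Matrix.fromCols (Atil * M)
          (Matrix.fromCols ((1 / 2 : ℝ) • (Nl + Nu))
            (Matrix.fromCols
              (Matrix.diagonal fun i => ∑ j, ((1 / 2 : ℝ) • (Nu - Nl)) i j)
              (Matrix.fromCols (D₁ * Mw) (L * D₂ * Mv))))) := by
  obtain ⟨ξ, hξ, rfl⟩ := he'
  have hJe' := mulVec_mem_zonotope_interval (hN J hJ) hξ
  rw [zero_add, mulVec_mulVec]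
  have hAe := mulVec_mem_zonotope_mul Atil he
  have hDw := mulVec_mem_zonotope_mul D₁ hw
  have hLDv := neg_mem_zonotope (mulVec_mem_zonotope_mul (L * D₂) hv)
  simp only [mulVec_zero, neg_zero] at hAe hDw hLDv
  simp only [zonotope_zero_fromCols]
  convert Set.add_mem_add hAe (Set.add_mem_add hJe' (Set.add_mem_add hDw hLDv)) using 1 <;> abel
end
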